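/- Let N_2 be the hat function and let ψ be the Chui–Wang linear spline wavelet ψ(x) = (1/12)·( N_2(2x) − 6 N_2(2x−1) + 10 N_2(2x−2) − 6 N_2(2x−3) + N_2(2x−4) ). Then ψ is orthogonal in L²(ℝ) to every integer translate of the generator: for every integer l, ∫_ℝ ψ(x) N_2(x − l) dx = 0. -/

import Mathlib

open MeasureTheory

/-- The hat function (linear B-spline): `N₂(x) = x` on `[0,1]`, `2 − x` on `[1,2]`, `0` else. -/
noncomputable def N2 : ℝ → ℝ := fun x =>
  if 0 ≤ x ∧ x ≤ 1 then x else if 1 ≤ x ∧ x ≤ 2 then 2 - x else 0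

/-- The Chui–Wang linear spline wavelet, with filter `g = [1, −6, 10, −6, 1]/12`. -/
noncomputable def ψ : ℝ → ℝ := fun x =>
  (1 / 12) * (N2 (2 * x) - 6 * N2 (2 * x - 1) + 10 * N2 (2 * x - 2) - 6 * N2 (2 * x - 3) +
    N2 (2 * x - 4))

/-!
Write `a(m) = ∫ N₂(2x − m) N₂(x) dx` (`dilatedHatInner m`). Substituting `x ↦ x + l` and
expanding `ψ` gives `⟨ψ, N₂(· − l)⟩ = (1/12) ∑ₖ gₖ a(k − 2l)` with `g = (1, −6, 10, −6, 1)`.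
Since `N₂(2· − m)` lives on `[m/2, m/2 + 1]`, `a` vanishes off `{−1, …, 3}`, and there it is
`(1, 6, 10, 6, 1)/24` (symmetric under `m ↦ 2 − m` because `N₂(2 − x) = N₂(x)`); `g` annihilates
every even shift of this sequence: `6 − 60 + 60 − 6 = −6 + 60 − 60 + 6 = 6 − 6 = −6 + 6 = 0`.
-/

open Set Function

lemma N2_eq_max_min (x : ℝ) : N2 x = max 0 (min x (2 - x)) := by
  unfold N2
  split_ifs with h₁ h₂
  · rw [min_eq_left (by linarith), max_eq_right h₁.1]
  · rw [min_eq_right (by linarith), max_eq_right (by linarith)]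
  · rw [not_and_or, not_le, not_le] at h₁ h₂
    rcases h₁ with h | h
    · rw [min_eq_left (by linarith), max_eq_left h.le]
    · rw [min_eq_right (by linarith), max_eq_left (by rcases h₂ with h' | h' <;> linarith)]

lemma N2_of_le_one {x : ℝ} (h₀ : 0 ≤ x) (h₁ : x ≤ 1) : N2 x = x := by
  rw [N2_eq_max_min, min_eq_left (by linarith), max_eq_right h₀]

lemma N2_of_one_le {x : ℝ} (h₁ : 1 ≤ x) (h₂ : x ≤ 2) : N2 x = 2 - x := by
  rw [N2_eq_max_min, min_eq_right (by linarith), max_eq_right (by linarith)]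

lemma N2_two_sub (x : ℝ) : N2 (2 - x) = N2 x := by
  rw [N2_eq_max_min, N2_eq_max_min, sub_sub_cancel, min_comm]

lemma continuous_N2 : Continuous N2 := by
  simp only [funext N2_eq_max_min]
  fun_prop

lemma support_N2 : support N2 ⊆ Ioo 0 2 := by
  intro x hx
  rw [mem_support, N2_eq_max_min] at hx
  by_contra h
  rw [mem_Ioo, not_and_or, not_lt, not_lt] at h
  refine hx (max_eq_left ?_)
  rcases h with h | h
  · exact (min_le_left _ _).trans h
  · exact (min_le_right _ _).trans (by linarith)

lemma hasCompactSupport_N2 : HasCompactSupport N2 :=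
  HasCompactSupport.of_support_subset_isCompact isCompact_Icc (support_N2.trans Ioo_subset_Icc_self)

lemma intervalIntegral_eq_of_eq_quadratic {f : ℝ → ℝ} {a b : ℝ} (c₀ c₁ c₂ : ℝ) (hab : a ≤ b)
    (hf : ∀ x, a ≤ x → x ≤ b → f x = c₀ + c₁ * x + c₂ * x ^ 2) :
    ∫ x in a..b, f x = c₀ * (b - a) + c₁ * (b ^ 2 - a ^ 2) / 2 + c₂ * (b ^ 3 - a ^ 3) / 3 := by
  rw [intervalIntegral.integral_congr fun x hx =>
      hf x (uIcc_of_le hab ▸ hx).1 (uIcc_of_le hab ▸ hx).2,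
    intervalIntegral.integral_add, intervalIntegral.integral_add,
    intervalIntegral.integral_const_mul, intervalIntegral.integral_const_mul]
  · simp only [intervalIntegral.integral_const, smul_eq_mul, integral_id, integral_pow]
    ring
  all_goals exact Continuous.intervalIntegrable (by fun_prop) _ _

noncomputable def dilatedHatInner (m : ℝ) : ℝ := ∫ x, N2 (2 * x - m) * N2 x

lemma integral_N2_dilate_mul_N2_translate (k t : ℝ) :
    ∫ x, N2 (2 * x - k) * N2 (x - t) = dilatedHatInner (k - 2 * t) := by
  rw [← integral_add_right_eq_self _ t, dilatedHatInner]
  congr with x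
  ring_nf

lemma dilatedHatInner_two_sub (m : ℝ) : dilatedHatInner (2 - m) = dilatedHatInner m := by
  rw [dilatedHatInner, ← integral_sub_left_eq_self _ _ 2, dilatedHatInner]
  congr with x
  rw [← N2_two_sub (2 - x), ← N2_two_sub (2 * (2 - x) - (2 - m))]
  ring_nf

lemma mem_Ioo_of_N2_dilate_mul_N2_ne_zero {m x : ℝ} (h : N2 (2 * x - m) * N2 x ≠ 0) :
    x ∈ Ioo 0 2 ∧ 2 * x - m ∈ Ioo 0 2 :=
  ⟨support_N2 (right_ne_zero_of_mul h), support_N2 (left_ne_zero_of_mul h)⟩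

lemma dilatedHatInner_eq_zero {m : ℝ} (hm : m ≤ -2 ∨ 4 ≤ m) : dilatedHatInner m = 0 := by
  have hzero : (fun x => N2 (2 * x - m) * N2 x) = 0 := by
    funext x
    by_contra h
    obtain ⟨⟨h₁, h₂⟩, h₃, h₄⟩ := mem_Ioo_of_N2_dilate_mul_N2_ne_zero h
    rcases hm with hm | hm <;> linarith
  rw [dilatedHatInner, hzero, Pi.zero_def, integral_zero]

lemma dilatedHatInner_of_le {m : ℝ} (hm : m ≤ -2) : dilatedHatInner m = 0 :=
  dilatedHatInner_eq_zero (Or.inl hm)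

lemma dilatedHatInner_of_ge {m : ℝ} (hm : 4 ≤ m) : dilatedHatInner m = 0 :=
  dilatedHatInner_eq_zero (Or.inr hm)

lemma dilatedHatInner_eq_intervalIntegral {m a b : ℝ} (ha : a ≤ 0 ∨ a ≤ m / 2)
    (hb : 2 ≤ b ∨ m / 2 + 1 ≤ b) :
    dilatedHatInner m = ∫ x in a..b, N2 (2 * x - m) * N2 x := by
  rw [dilatedHatInner, intervalIntegral.integral_eq_integral_of_support_subset]
  intro x hx
  obtain ⟨⟨h₁, h₂⟩, h₃, h₄⟩ := mem_Ioo_of_N2_dilate_mul_N2_ne_zero hx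
  constructor
  · rcases ha with ha | ha <;> linarith
  · rcases hb with hb | hb <;> linarith

lemma continuous_N2_dilate_mul_N2 (m : ℝ) : Continuous fun x => N2 (2 * x - m) * N2 x := by
  have := continuous_N2
  fun_prop

lemma dilatedHatInner_neg_one : dilatedHatInner (-1) = 1 / 24 := by
  rw [dilatedHatInner_eq_intervalIntegral (a := 0) (b := 1 / 2) (by norm_num) (by norm_num),
    intervalIntegral_eq_of_eq_quadratic 0 1 (-2) (by norm_num) fun x h₀ h₁ => by
      rw [N2_of_one_le (by linarith) (by linarith), N2_of_le_one h₀ (by linarith)]; ring]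
  norm_num

lemma dilatedHatInner_zero : dilatedHatInner 0 = 1 / 4 := by
  have hint := (continuous_N2_dilate_mul_N2 0).intervalIntegrable (μ := volume)
  rw [dilatedHatInner_eq_intervalIntegral (a := 0) (b := 1) (by norm_num) (by norm_num),
    ← intervalIntegral.integral_add_adjacent_intervals (hint 0 (1 / 2)) (hint (1 / 2) 1),
    intervalIntegral_eq_of_eq_quadratic 0 0 2 (by norm_num) fun x h₀ h₁ => by
      rw [N2_of_le_one (by linarith) (by linarith), N2_of_le_one h₀ (by linarith)]; ring,
    intervalIntegral_eq_of_eq_quadratic 0 2 (-2) (by norm_num) fun x h₀ h₁ => by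
      rw [N2_of_one_le (by linarith) (by linarith), N2_of_le_one (by linarith) h₁]; ring]
  norm_num

lemma dilatedHatInner_one : dilatedHatInner 1 = 5 / 12 := by
  have hint := (continuous_N2_dilate_mul_N2 1).intervalIntegrable (μ := volume)
  rw [dilatedHatInner_eq_intervalIntegral (a := 1 / 2) (b := 3 / 2) (by norm_num) (by norm_num),
    ← intervalIntegral.integral_add_adjacent_intervals (hint (1 / 2) 1) (hint 1 (3 / 2)),
    intervalIntegral_eq_of_eq_quadratic 0 (-1) 2 (by norm_num) fun x h₀ h₁ => by
      rw [N2_of_le_one (by linarith) (by linarith), N2_of_le_one (by linarith) h₁]; ring,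
    intervalIntegral_eq_of_eq_quadratic 6 (-7) 2 (by norm_num) fun x h₀ h₁ => by
      rw [N2_of_one_le (by linarith) (by linarith), N2_of_one_le h₀ (by linarith)]; ring]
  norm_num

lemma dilatedHatInner_two : dilatedHatInner 2 = 1 / 4 := by
  rw [← dilatedHatInner_zero, ← dilatedHatInner_two_sub 0, sub_zero]

lemma dilatedHatInner_three : dilatedHatInner 3 = 1 / 24 := by
  rw [← dilatedHatInner_neg_one, ← dilatedHatInner_two_sub (-1)]
  norm_num

lemma integrable_N2_dilate_mul_N2_translate (k t : ℝ) :
    Integrable fun x => N2 (2 * x - k) * N2 (x - t) := by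
  have := continuous_N2
  refine Continuous.integrable_of_hasCompactSupport (by fun_prop) (HasCompactSupport.mul_left ?_)
  exact hasCompactSupport_N2.comp_homeomorph (Homeomorph.subRight t)

lemma integral_ψ_mul_N2_translate (t : ℝ) :
    ∫ x, ψ x * N2 (x - t) =
      (dilatedHatInner (-2 * t) - 6 * dilatedHatInner (1 - 2 * t) + 10 * dilatedHatInner (2 - 2 * t)
        - 6 * dilatedHatInner (3 - 2 * t) + dilatedHatInner (4 - 2 * t)) / 12 := by
  have hI := fun k => integrable_N2_dilate_mul_N2_translate k t
  have hψ : ∀ x, ψ x * N2 (x - t) =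
      (N2 (2 * x - 0) * N2 (x - t) - 6 * (N2 (2 * x - 1) * N2 (x - t))
      + 10 * (N2 (2 * x - 2) * N2 (x - t)) - 6 * (N2 (2 * x - 3) * N2 (x - t))
      + N2 (2 * x - 4) * N2 (x - t)) / 12 := by
    intro x
    rw [ψ, sub_zero]
    ring
  simp only [hψ]
  rw [integral_div, integral_add _ (hI 4), integral_sub _ ((hI 3).const_mul 6),
    integral_add _ ((hI 2).const_mul 10), integral_sub (hI 0) ((hI 1).const_mul 6)]
  · simp only [integral_const_mul, integral_N2_dilate_mul_N2_translate, zero_sub, neg_mul]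
  all_goals fun_prop

/-- The Chui–Wang linear spline wavelet is orthogonal in `L²(ℝ)` to every integer translate
of the generator `N₂`. -/
theorem chuiWang_semiorthogonal :
    ∀ l : ℤ, (∫ x : ℝ, ψ x * N2 (x - (l : ℝ))) = 0 := by
  intro l
  rw [integral_ψ_mul_N2_translate]
  rcases (by omega : l ≤ -2 ∨ 3 ≤ l ∨ -1 ≤ l ∧ l ≤ 2) with hl | hl | ⟨hl₁, hl₂⟩
  · have hl : (l : ℝ) ≤ -2 := by exact_mod_cast hl
    rw [dilatedHatInner_of_ge, dilatedHatInner_of_ge, dilatedHatInner_of_ge,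
      dilatedHatInner_of_ge, dilatedHatInner_of_ge]
    · ring
    all_goals linarith
  · have hl : (3 : ℝ) ≤ l := by exact_mod_cast hl
    rw [dilatedHatInner_of_le, dilatedHatInner_of_le, dilatedHatInner_of_le,
      dilatedHatInner_of_le, dilatedHatInner_of_le]
    · ring
    all_goals linarith
  · interval_cases l <;>
      norm_num [dilatedHatInner_of_le, dilatedHatInner_of_ge, dilatedHatInner_neg_one,
        dilatedHatInner_zero, dilatedHatInner_one, dilatedHatInner_two, dilatedHatInner_three]
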